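/- Let Γ be an abelian group with homomorphisms ω : Γ → ℝ and c₁ : Γ → ℤ, and Λ the associated ℤ/2-Novikov ring. Let Q be a Λ-algebra that is free as a Λ-module with unit u, let q ∈ Q satisfy q² = u·⟨δ⟩·(1 + ⟨x⟩) where δ, x ∈ Γ and x has infinite order. Then for all m ≥ 1, q^{2m} = u·⟨mδ⟩·(1+⟨x⟩)^m, and q^{2m} is not of the form u·⟨γ⟩ for any γ ∈ Γ. Consequently q^k ∉ {u·⟨γ⟩ : γ ∈ Γ} for all k ≥ 2 even, provided also q itself and odd powers avoid this set. -/

import Mathlib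

/-! Since `x` has infinite order, the points `k • x` are distinct, so the binomial expansion of
`(1 + ⟨x⟩) ^ m` has coefficient `1` at both `0` and `m • x`: multiplied by a monomial it is never a
monomial. Because `Q` is free and nonzero, `Λ → Q` is injective, and `q ^ (2 * m)` is the image of
`⟨m • δ⟩ * (1 + ⟨x⟩) ^ m`. -/

open AddMonoidAlgebra Finset

namespace AddMonoidAlgebra

variable {R Γ : Type*} [CommSemiring R]

theorem one_add_single_pow [AddCommMonoid Γ] (x : Γ) (m : ℕ) :
    (1 + single x (1 : R)) ^ m = ∑ k ∈ range (m + 1), single (k • x) (m.choose k : R) := by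
  rw [add_comm, add_pow]
  refine sum_congr rfl fun k _ => ?_
  rw [one_pow, mul_one, single_pow, one_pow, natCast_def, single_mul_single, add_zero, one_mul]

theorem coeff_one_add_single_pow [AddCommMonoid Γ] {x : Γ}
    (hx : Function.Injective fun n : ℕ => n • x) {m k : ℕ} (hk : k ≤ m) :
    ((1 + single x (1 : R)) ^ m).coeff (k • x) = m.choose k := by
  rw [one_add_single_pow, coeff_sum, Finsupp.finsetSum_apply,
    sum_eq_single_of_mem k (mem_range.mpr (Nat.lt_succ_of_le hk))]
  · simp [coeff_single]
  · intro j _ hjk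
    simp [coeff_single, hx.ne hjk]

theorem single_mul_one_add_single_pow_ne_single [Nontrivial R] [AddCommGroup Γ] {x : Γ}
    (hx : Function.Injective fun n : ℕ => n • x) {m : ℕ} (hm : m ≠ 0) (a c : Γ) (r : R) :
    single a 1 * (1 + single x (1 : R)) ^ m ≠ single c r := by
  intro h
  have eq_c {k : ℕ} (hk : k ≤ m) (hchoose : m.choose k = 1) : a + k • x = c := by
    have hcoeff : (single c r).coeff (a + k • x) = 1 := by
      rw [← h, coeff_single_mul_apply, neg_add_cancel_left, coeff_one_add_single_pow hx hk,
        hchoose, Nat.cast_one, one_mul]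
    by_contra hne
    simp [coeff_single, Ne.symm hne] at hcoeff
  have := (eq_c le_rfl m.choose_self).trans (eq_c m.zero_le m.choose_zero_right).symm
  exact hm (hx (add_left_cancel this))

end AddMonoidAlgebra

/-- If `Q` is a free algebra over the Novikov/group ring `Λ = (ℤ/2)[Γ]` with unit `u = 1`,
and `q² = u·⟨δ⟩·(1+⟨x⟩)` where `x` has infinite order, then
`q^{2m} = u·⟨mδ⟩·(1+⟨x⟩)^m` and no even power `q^k` (`k ≥ 2`) is a monomial `u·⟨γ⟩`. -/
theorem even_powers_not_monomial {Γ : Type*} [AddCommGroup Γ]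
    (Q : Type*) [CommRing Q] [Nontrivial Q]
    [Algebra (AddMonoidAlgebra (ZMod 2) Γ) Q]
    (hfree : Module.Free (AddMonoidAlgebra (ZMod 2) Γ) Q)
    (δ x : Γ) (hx : ∀ n : ℤ, n ≠ 0 → n • x ≠ 0)
    (q : Q)
    (hq : q ^ 2 = algebraMap (AddMonoidAlgebra (ZMod 2) Γ) Q
        (AddMonoidAlgebra.single δ 1 * (1 + AddMonoidAlgebra.single x 1))) :
    (∀ m : ℕ, 1 ≤ m → q ^ (2 * m) = algebraMap (AddMonoidAlgebra (ZMod 2) Γ) Q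
        (AddMonoidAlgebra.single ((m : ℤ) • δ) 1 * (1 + AddMonoidAlgebra.single x 1) ^ m)) ∧
    (∀ k : ℕ, 2 ≤ k → Even k → ∀ γ : Γ,
      q ^ k ≠ algebraMap (AddMonoidAlgebra (ZMod 2) Γ) Q (AddMonoidAlgebra.single γ 1)) := by
  have hinj : Function.Injective fun n : ℕ => n • x :=
    injective_nsmul_iff_not_isOfFinAddOrder.mpr fun hfin =>
      let ⟨n, hn, hnx⟩ := isOfFinAddOrder_iff_zsmul_eq_zero.mp hfin
      hx n hn hnx
  have hpow (m : ℕ) : q ^ (2 * m) = algebraMap (AddMonoidAlgebra (ZMod 2) Γ) Q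
      (single ((m : ℤ) • δ) 1 * (1 + single x 1) ^ m) := by
    rw [pow_mul, hq, ← map_pow, mul_pow, single_pow, one_pow, natCast_zsmul]
  refine ⟨fun m _ => hpow m, ?_⟩
  rintro k hk ⟨m, rfl⟩ γ h
  have := hfree
  rw [← two_mul, hpow] at h
  exact single_mul_one_add_single_pow_ne_single hinj (by omega) _ _ _
    (FaithfulSMul.algebraMap_injective _ Q h)
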